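/- arXiv:2303.17265 — 3 statements merged into one kernel-verified Lean document; each statement's English description precedes it below -/
import Mathlib

section
/- For every real t and every u > 0, the infinite series ∑_{m=0}^∞ ((-t)^m e^{−u} / m!) · (u^{2m} − 2m·u^{2m−1} − 2m·u^{2m−2}) converges and its sum equals (1 + 2t + 2tu) · e^{−u(1+tu)}. -/
open MeasureTheory

lemma djm_hasSum_exp_real (x : ℝ) :
    HasSum (fun n : ℕ => x ^ n / n.factorial) (Real.exp x) := by
  rw [Real.exp_eq_exp_ℝ]
  exact NormedSpace.expSeries_div_hasSum_exp x

/-- The DJM series for the breakage equation with selection `S(v) = v^2`,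
breakage function `B(u,v) = 2/v` and initial datum `e^{-u}` sums to the exact
solution `(1 + 2t + 2tu) * e^{-u(1+tu)}`. -/
theorem djm_series_breakage_quadratic_selection (t u : ℝ) (hu : 0 < u) :
    HasSum
      (fun m : ℕ =>
        ((-t) ^ m * Real.exp (-u) / m.factorial) *
          (u ^ (2 * m) - 2 * m * u ^ (2 * m - 1) - 2 * m * u ^ (2 * m - 2)))
      ((1 + 2 * t + 2 * t * u) * Real.exp (-u * (1 + t * u))) := by
  set x : ℝ := -t * u ^ 2 with hxdef
  have hx := djm_hasSum_exp_real x
  have h1 := hx.mul_left (Real.exp (-u))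
  have h2 := hx.mul_left (2 * t * (u + 1) * Real.exp (-u))
  set g : ℕ → ℝ := fun m =>
    Nat.casesOn m 0 (fun n => 2 * t * (u + 1) * Real.exp (-u) * (x ^ n / n.factorial)) with hg
  have h2' : HasSum g (2 * t * (u + 1) * Real.exp (-u) * Real.exp x) := by
    have hinj : Function.Injective Nat.succ := Nat.succ_injective
    rw [← Function.Injective.hasSum_iff hinj ?_]
    · exact h2
    · intro m hm
      cases m with
      | zero => rfl
      | succ n => exact absurd ⟨n, rfl⟩ hm
  have hsum := h1.add h2'
  have hval : Real.exp (-u) * Real.exp x + 2 * t * (u + 1) * Real.exp (-u) * Real.exp x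
      = (1 + 2 * t + 2 * t * u) * Real.exp (-u * (1 + t * u)) := by
    rw [← Real.exp_add]
    have hh : -u * (1 + t * u) = -u + x := by rw [hxdef]; ring
    rw [hh, Real.exp_add]
    ring
  rw [hval] at hsum
  convert hsum using 2 with m
  · rfl
  cases m with
  | zero => simp [hg]
  | succ n =>
    have hfac : ((n + 1).factorial : ℝ) = (n + 1) * n.factorial := by
      push_cast [Nat.factorial_succ]; ring
    have h2m1 : 2 * (n + 1) - 1 = 2 * n + 1 := by omega
    have h2m2 : 2 * (n + 1) - 2 = 2 * n := by omega
    have h2m : 2 * (n + 1) = 2 * n + 2 := by omega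
    simp only [h2m1, h2m2, h2m, hg, hxdef, show 2 * n + 2 - 1 = 2 * n + 1 by omega,
      show 2 * n + 2 - 2 = 2 * n by omega, Nat.factorial_succ, Nat.cast_mul, Nat.cast_succ]
    have hn0 : (n.factorial : ℝ) ≠ 0 := by positivity
    have hn1 : ((n : ℝ) + 1) ≠ 0 := by positivity
    field_simp [hfac]
    ring
end

section
/- Define functions c_m : ℝ × (0,∞) → ℝ recursively by c_0(t,u) = e^{−u} and c_{m+1}(t,u) = ∫_0^t ( 2∫_u^∞ v·c_m(s,v) dv − u^2·c_m(s,u) ) ds. Then for every m ≥ 0, every real t, and every u > 0, c_m(t,u) = ((-t)^m e^{−u} / m!) · (u^{2m} − 2m·u^{2m−1} − 2m·u^{2m−2}). -/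
open MeasureTheory

/-- The Daftardar–Jafari iterates for the breakage equation
`∂c/∂t = 2 ∫_u^∞ v c(t,v) dv - u^2 c(t,u)` with initial datum `e^{-u}`:
`c_0(t,u) = e^{-u}` and
`c_{m+1}(t,u) = ∫_0^t (2 ∫_u^∞ v c_m(s,v) dv - u^2 c_m(s,u)) ds`. -/
noncomputable def djmIterQuadratic : ℕ → ℝ → ℝ → ℝ
  | 0 => fun _ u => Real.exp (-u)
  | m + 1 => fun t u =>
      ∫ s in (0:ℝ)..t,
        ((2 * ∫ v in Set.Ioi u, v * djmIterQuadratic m s v) - u ^ 2 * djmIterQuadratic m s u)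

section DJMAux
open Filter Topology Asymptotics Real Set
lemma integrableOn_pow_mul_exp_neg (n : ℕ) (a : ℝ) :
    IntegrableOn (fun x : ℝ => x ^ n * Real.exp (-x)) (Set.Ioi a) := by
  apply integrable_of_isBigO_exp_neg (b := 1/2) one_half_pos
  · exact (Continuous.mul (continuous_pow n) (Real.continuous_exp.comp continuous_neg)).continuousOn
  · have h2 : Tendsto (fun x : ℝ => (x/2) ^ n * Real.exp (-(x/2))) atTop (𝓝 0) :=
      (tendsto_pow_mul_exp_neg_atTop_nhds_zero n).comp
        (Filter.Tendsto.atTop_div_const two_pos tendsto_id)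
    rw [Asymptotics.isBigO_iff]
    refine ⟨2 ^ n, ?_⟩
    filter_upwards [Filter.eventually_ge_atTop (0:ℝ), h2.eventually (eventually_le_nhds one_pos)]
      with x hx h1
    have hxe : Real.exp (-x) = Real.exp (-(x/2)) * Real.exp (-(x/2)) := by
      rw [← Real.exp_add]; ring_nf
    have hxp : x ^ n = 2 ^ n * (x/2) ^ n := by
      rw [← mul_pow]; ring_nf
    rw [Real.norm_eq_abs, Real.norm_eq_abs, abs_of_nonneg (by positivity),
      abs_of_nonneg (Real.exp_pos _).le, hxe, hxp]
    have : (2:ℝ) ^ n * (x/2) ^ n * (Real.exp (-(x/2)) * Real.exp (-(x/2)))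
        = 2 ^ n * (((x/2) ^ n * Real.exp (-(x/2))) * Real.exp (-(x/2))) := by ring
    rw [this]
    have h0 : (0:ℝ) ≤ (x/2) ^ n * Real.exp (-(x/2)) := by positivity
    calc 2 ^ n * (((x/2) ^ n * Real.exp (-(x/2))) * Real.exp (-(x/2)))
        ≤ 2 ^ n * (1 * Real.exp (-(x/2))) := by
          gcongr
      _ = 2 ^ n * Real.exp (-(1/2) * x) := by rw [one_mul]; ring_nf

lemma breakage_key_integral (k : ℕ) (u : ℝ) :
    ∫ v in Set.Ioi u,
        (v ^ (k+1) * Real.exp (-v) - (k:ℝ) * (v ^ k * Real.exp (-v))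
          - (k:ℝ) * (v ^ (k-1) * Real.exp (-v)))
      = Real.exp (-u) * (u ^ (k+1) + u ^ k) := by
  have hderiv : ∀ x ∈ Set.Ici u,
      HasDerivAt (fun v : ℝ => -(Real.exp (-v) * (v ^ (k+1) + v ^ k)))
        (x ^ (k+1) * Real.exp (-x) - (k:ℝ) * (x ^ k * Real.exp (-x))
          - (k:ℝ) * (x ^ (k-1) * Real.exp (-x))) x := by
    intro x _
    have h1 : HasDerivAt (fun v : ℝ => Real.exp (-v)) (-Real.exp (-x)) x := by
      simpa [Function.comp_def] using (Real.hasDerivAt_exp (-x)).comp x ((hasDerivAt_id x).neg)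
    have h2 : HasDerivAt (fun v : ℝ => v ^ (k+1) + v ^ k)
        (((k:ℝ)+1) * x ^ k + (k:ℝ) * x ^ (k-1)) x := by
      have := (hasDerivAt_pow (k+1) x).add (hasDerivAt_pow k x)
      simpa [Pi.add_def] using this
    have h3 := (h1.mul h2).neg
    refine h3.congr_deriv ?_
    ring
  have hint : IntegrableOn (fun v : ℝ =>
      v ^ (k+1) * Real.exp (-v) - (k:ℝ) * (v ^ k * Real.exp (-v))
        - (k:ℝ) * (v ^ (k-1) * Real.exp (-v))) (Set.Ioi u) := by
    exact ((integrableOn_pow_mul_exp_neg (k+1) u).sub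
      ((integrableOn_pow_mul_exp_neg k u).const_mul _)).sub
      ((integrableOn_pow_mul_exp_neg (k-1) u).const_mul _)
  have htend : Filter.Tendsto (fun v : ℝ => -(Real.exp (-v) * (v ^ (k+1) + v ^ k)))
      Filter.atTop (nhds 0) := by
    have := ((tendsto_pow_mul_exp_neg_atTop_nhds_zero (k+1)).add
      (tendsto_pow_mul_exp_neg_atTop_nhds_zero k)).neg
    simp only [add_zero, neg_zero] at this
    refine this.congr fun x => by ring
  have h := integral_Ioi_of_hasDerivAt_of_tendsto' hderiv hint htend
  rw [h]; ring

lemma djm_aux : ∀ m : ℕ, ∀ t u : ℝ, 0 < u →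
    djmIterQuadratic m t u =
      ((-t) ^ m * Real.exp (-u) / m.factorial) *
        (u ^ (2 * m) - 2 * m * u ^ (2 * m - 1) - 2 * m * u ^ (2 * m - 2)) := by
  intro m
  induction m with
  | zero => intro t u hu; simp [djmIterQuadratic]
  | succ m ih =>
    intro t u hu
    have hinner : ∀ s : ℝ,
        (∫ v in Set.Ioi u, v * djmIterQuadratic m s v)
          = ((-s) ^ m / m.factorial) * (Real.exp (-u) * (u ^ (2*m+1) + u ^ (2*m))) := by
      intro s
      have heq : Set.EqOn (fun v => v * djmIterQuadratic m s v)
          (fun v => ((-s) ^ m / m.factorial) *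
            (v ^ (2*m+1) * Real.exp (-v) - ((2*m : ℕ) : ℝ) * (v ^ (2*m) * Real.exp (-v))
              - ((2*m : ℕ) : ℝ) * (v ^ (2*m-1) * Real.exp (-v)))) (Set.Ioi u) := by
        intro v hv
        have hv0 : 0 < v := lt_trans hu hv
        simp only
        rw [ih s v hv0]
        rcases m with _ | m
        · norm_num
        · have h1 : 2 * (m+1) - 1 = 2*m+1 := by omega
          have h2 : 2 * (m+1) - 2 = 2*m := by omega
          rw [h1, h2]
          push_cast
          ring
      rw [MeasureTheory.setIntegral_congr_fun measurableSet_Ioi heq,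
        MeasureTheory.integral_const_mul, breakage_key_integral (2*m) u]
    have hbrack : ∀ s : ℝ,
        ((2 * ∫ v in Set.Ioi u, v * djmIterQuadratic m s v) - u ^ 2 * djmIterQuadratic m s u)
          = ((-s) ^ m / m.factorial) *
            (Real.exp (-u) *
              (-(u ^ (2*m+2) - (2*(m:ℝ)+2) * u ^ (2*m+1) - (2*(m:ℝ)+2) * u ^ (2*m)))) := by
      intro s
      rw [hinner s, ih s u hu]
      rcases m with _ | m
      · norm_num; ring
      · have h1 : 2 * (m+1) - 1 = 2*m+1 := by omega
        have h2 : 2 * (m+1) - 2 = 2*m := by omega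
        rw [h1, h2]
        push_cast
        ring
    show (∫ s in (0:ℝ)..t,
        ((2 * ∫ v in Set.Ioi u, v * djmIterQuadratic m s v) - u ^ 2 * djmIterQuadratic m s u)) = _
    simp only [hbrack]
    have hpull : (∫ s in (0:ℝ)..t, ((-s) ^ m / m.factorial) *
          (Real.exp (-u) *
            (-(u ^ (2*m+2) - (2*(m:ℝ)+2) * u ^ (2*m+1) - (2*(m:ℝ)+2) * u ^ (2*m)))))
        = (((-1:ℝ)) ^ m / m.factorial *
            (Real.exp (-u) *
              (-(u ^ (2*m+2) - (2*(m:ℝ)+2) * u ^ (2*m+1) - (2*(m:ℝ)+2) * u ^ (2*m)))))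
            * ∫ s in (0:ℝ)..t, s ^ m := by
      rw [← intervalIntegral.integral_const_mul]
      apply intervalIntegral.integral_congr
      intro s _
      rw [neg_pow]
      ring
    rw [hpull, integral_pow]
    have h1 : 2 * (m+1) - 1 = 2*m+1 := by omega
    have h2 : 2 * (m+1) - 2 = 2*m := by omega
    rw [h1, h2, Nat.factorial_succ]
    have hfac : (m.factorial : ℝ) ≠ 0 := Nat.cast_ne_zero.mpr m.factorial_ne_zero
    have hm1 : ((m:ℝ) + 1) ≠ 0 := by positivity
    rw [show (-t) ^ (m+1) = (-1:ℝ) ^ (m+1) * t ^ (m+1) from neg_pow t (m+1), pow_succ]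
    push_cast
    field_simp
    ring

end DJMAux

/-- Closed form of the DJM terms for the breakage equation with selection
`S(v) = v^2` and breakage function `B(u,v) = 2/v`:
`c_m(t,u) = ((-t)^m e^{-u}/m!) (u^{2m} - 2m u^{2m-1} - 2m u^{2m-2})`. -/
theorem djmIterQuadratic_closed_form (m : ℕ) (t : ℝ) (u : ℝ) (hu : 0 < u) :
    djmIterQuadratic m t u =
      ((-t) ^ m * Real.exp (-u) / m.factorial) *
        (u ^ (2 * m) - 2 * m * u ^ (2 * m - 1) - 2 * m * u ^ (2 * m - 2)) :=
  djm_aux m t u hu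
end

section
/- For t ≥ 0 and u > 0, the partial sums Φ_n(t,u) = ∑_{m=0}^{n} ((-t)^m e^{−u}/m!)(u^{2m} − 2m u^{2m−1} − 2m u^{2m−2}) of the DJM series for the breakage equation with S(v) = v^2, B(u,v) = 2/v and initial data e^{−u} satisfy: for every fixed t ≥ 0 and every compact set of volumes [a,b] ⊂ (0,∞), Φ_n converges uniformly on [a,b] to (1+2t+2tu) e^{−u(1+tu)} as n → ∞. -/
/-!
Writing `y = -t u²`, the `m`-th DJM term (`m ≥ 1`) is
`e^{-u} (y^m / m! + 2t(1 + u) y^{m-1} / (m-1)!)`, so the `n`-th partial sum is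
`e^{-u} (E_{n+1}(y) + 2t(1 + u) E_n(y))` with `E_n` the partial sums of the exponential series.
These converge to `exp` locally uniformly on `ℝ`; composing with the continuous map `u ↦ -t u²`
and multiplying by continuous functions preserves locally uniform convergence, whose limit is
`e^{-u} e^{-t u²} (1 + 2t(1 + u))`. Locally uniform convergence is uniform on compact sets.
-/

open Filter

theorem TendstoLocallyUniformly.comp_tendsto {α β ι κ : Type*} [TopologicalSpace α]
    [UniformSpace β] {F : ι → α → β} {f : α → β} {p : Filter ι} {q : Filter κ}
    (h : TendstoLocallyUniformly F f p) {φ : κ → ι} (hφ : Tendsto φ q p) :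
    TendstoLocallyUniformly (fun n => F (φ n)) f q := fun u hu x =>
  let ⟨s, hs, hF⟩ := h u hu x
  ⟨s, hs, hφ.eventually hF⟩

theorem tendstoLocallyUniformly_const {α β ι : Type*} [TopologicalSpace α]
    [UniformSpace β] (f : α → β) (p : Filter ι) :
    TendstoLocallyUniformly (fun _ => f) f p := fun _ hu _ =>
  ⟨Set.univ, univ_mem, Eventually.of_forall fun _ _ _ => refl_mem_uniformity hu⟩

noncomputable def expPartialSum (n : ℕ) (x : ℝ) : ℝ :=
  ∑ m ∈ Finset.range n, x ^ m / m.factorial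

theorem expPartialSum_succ (n : ℕ) (x : ℝ) :
    expPartialSum (n + 1) x = expPartialSum n x + x ^ n / n.factorial :=
  Finset.sum_range_succ _ _

theorem tendstoLocallyUniformly_expPartialSum :
    TendstoLocallyUniformly expPartialSum Real.exp atTop := by
  have h := (NormedSpace.exp_hasFPowerSeriesOnBall (𝕂 := ℝ) (𝔸 := ℝ)).tendstoLocallyUniformlyOn'
  rw [Metric.eball_top, tendstoLocallyUniformlyOn_univ, ← Real.exp_eq_exp_ℝ] at h
  convert h using 3 with n x
  simp only [expPartialSum, FormalMultilinearSeries.partialSum, NormedSpace.expSeries_apply_eq,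
    sub_zero, smul_eq_mul, div_eq_inv_mul]

noncomputable def djmTerm (t : ℝ) (m : ℕ) (u : ℝ) : ℝ :=
  ((-t) ^ m * Real.exp (-u) / m.factorial) *
    (u ^ (2 * m) - 2 * m * u ^ (2 * m - 1) - 2 * m * u ^ (2 * m - 2))

theorem djmTerm_zero (t u : ℝ) : djmTerm t 0 u = Real.exp (-u) := by
  simp [djmTerm]

theorem djmTerm_succ (t : ℝ) (m : ℕ) (u : ℝ) :
    djmTerm t (m + 1) u = Real.exp (-u) * ((-t * u ^ 2) ^ (m + 1) / (m + 1).factorial +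
      2 * t * (1 + u) * ((-t * u ^ 2) ^ m / m.factorial)) := by
  rw [djmTerm, show 2 * (m + 1) - 1 = 2 * m + 1 by omega,
    show 2 * (m + 1) - 2 = 2 * m by omega, Nat.factorial_succ]
  push_cast
  field_simp
  ring

theorem sum_range_succ_djmTerm (t u : ℝ) (n : ℕ) :
    ∑ m ∈ Finset.range (n + 1), djmTerm t m u = Real.exp (-u) *
      (expPartialSum (n + 1) (-t * u ^ 2) + 2 * t * (1 + u) * expPartialSum n (-t * u ^ 2)) := by
  induction n with
  | zero => simp [djmTerm_zero, expPartialSum]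
  | succ n ih =>
    rw [Finset.sum_range_succ, ih, djmTerm_succ, expPartialSum_succ (n + 1), expPartialSum_succ n]
    ring

theorem tendstoLocallyUniformly_sum_range_succ_djmTerm (t : ℝ) :
    TendstoLocallyUniformly (fun n u => ∑ m ∈ Finset.range (n + 1), djmTerm t m u)
      (fun u => (1 + 2 * t + 2 * t * u) * Real.exp (-u * (1 + t * u))) atTop := by
  have hE := tendstoLocallyUniformly_expPartialSum.comp (fun u : ℝ => -t * u ^ 2) (by fun_prop)
  have hE_succ := hE.comp_tendsto (tendsto_add_atTop_nat 1)
  have hweighted := (tendstoLocallyUniformly_const (fun u : ℝ => 2 * t * (1 + u)) atTop).fun_mul₀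
    hE (by fun_prop) (by fun_prop)
  have hlim := (tendstoLocallyUniformly_const (fun u : ℝ => Real.exp (-u)) atTop).fun_mul₀
    (hE_succ.fun_add hweighted) (by fun_prop) (by fun_prop)
  convert hlim using 2 with n u
  · ext u
    exact sum_range_succ_djmTerm t u n
  · simp only [Function.comp_apply]
    rw [show -u * (1 + t * u) = -u + -t * u ^ 2 by ring, Real.exp_add]
    ring

theorem djm_partial_sums_tendstoUniformlyOn_quadratic_selection_general
    (t : ℝ) (a b : ℝ) :
    TendstoUniformlyOn
      (fun n u => ∑ m ∈ Finset.range (n + 1),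
        ((-t) ^ m * Real.exp (-u) / m.factorial) *
          (u ^ (2 * m) - 2 * m * u ^ (2 * m - 1) - 2 * m * u ^ (2 * m - 2)))
      (fun u => (1 + 2 * t + 2 * t * u) * Real.exp (-u * (1 + t * u)))
      atTop (Set.Icc a b) :=
  tendstoLocallyUniformly_iff_forall_isCompact.mp
    (tendstoLocallyUniformly_sum_range_succ_djmTerm t) _ isCompact_Icc

/-- Uniform convergence on compact volume sets of the DJM partial sums
`Φ_n(t,u) = ∑_{m=0}^n ((-t)^m e^{-u}/m!)(u^{2m} - 2m u^{2m-1} - 2m u^{2m-2})`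
to the exact solution `(1+2t+2tu) e^{-u(1+tu)}` of the breakage equation with
`S(v)=v^2`, `B(u,v)=2/v` and initial datum `e^{-u}`. -/
theorem djm_partial_sums_tendstoUniformlyOn_quadratic_selection
    (t : ℝ) (ht : 0 ≤ t) (a b : ℝ) (ha : 0 < a) (hab : a ≤ b) :
    TendstoUniformlyOn
      (fun n u => ∑ m ∈ Finset.range (n + 1),
        ((-t) ^ m * Real.exp (-u) / m.factorial) *
          (u ^ (2 * m) - 2 * m * u ^ (2 * m - 1) - 2 * m * u ^ (2 * m - 2)))
      (fun u => (1 + 2 * t + 2 * t * u) * Real.exp (-u * (1 + t * u)))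
      atTop (Set.Icc a b) :=
  djm_partial_sums_tendstoUniformlyOn_quadratic_selection_general t a b
end
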